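/- arXiv:2406.00136 — 5 statements merged into one kernel-verified Lean document; each statement's English description precedes it below -/
import Mathlib

section
/- Let L : C → D be a locally cartesian localization, where C has pullbacks and I-shaped colimits for some index category I. If I-shaped colimits are universal in C, then I-shaped colimits are universal in D. -/
/-! The reflection `L` induces on slices a left adjoint `R_Z : C/ιZ ⥤ D/Z`,
`(W → ιZ) ↦ (LW → LιZ ≅ Z)`, with `Over.post ι ⋙ R_Z ≅ 𝟭`. Local cartesianness says exactly that
`R_Z ⋙ f^* ≅ (ιf)^* ⋙ R_X`; the right side preserves `I`-colimits, since `(ιf)^*` does by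
universality in `C` and `R_X` is a left adjoint. As every diagram in `D/Z` is, up to isomorphism,
`R_Z` applied to a diagram in `C/ιZ` whose colimit `R_Z` preserves, `f^*` preserves its colimit. -/

open CategoryTheory CategoryTheory.Limits

variable {C D : Type*} [Category C] [Category D]

/-- Given a localization `L : C ⥤ D` (left adjoint to a fully faithful inclusion
`ι : D ⥤ C`) and a cospan `ι X ⟶ ι Z ⟵ Y` in `C` whose two corners `X` and `Z`
lie in `D`, the canonical comparison map `L (X ×_Z Y) ⟶ X ×_Z (L Y)`, where the
target is the pullback in `D` of `X ⟶ Z` and the adjoint transpose `L Y ⟶ Z`. -/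
noncomputable def localizationPullbackComparison
    [HasPullbacks C] [HasPullbacks D]
    (L : C ⥤ D) (ι : D ⥤ C) [ι.Full] [ι.Faithful] (adj : L ⊣ ι)
    (X Z : D) (Y : C) (f : ι.obj X ⟶ ι.obj Z) (g : Y ⟶ ι.obj Z) :
    L.obj (pullback f g) ⟶ pullback (ι.preimage f) ((adj.homEquiv Y Z).symm g) :=
  pullback.lift (L.map (pullback.fst f g) ≫ adj.counit.app X) (L.map (pullback.snd f g))
    (by
      simp only [Category.assoc, Adjunction.homEquiv_counit]
      rw [← adj.counit_naturality (ι.preimage f)]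
      simp only [Functor.comp_map, Functor.id_obj, Functor.map_preimage]
      rw [← Functor.map_comp_assoc, ← Functor.map_comp_assoc, pullback.condition])

section Retraction

variable {J A B E : Type*} [Category J] [Category A] [Category B] [Category E]

theorem preservesColimit_comp_of_preservesColimit (K : J ⥤ B) (R : B ⥤ A) (H : A ⥤ E)
    [HasColimit K] [PreservesColimit K R] [PreservesColimit K (R ⋙ H)] :
    PreservesColimit (K ⋙ R) H :=
  preservesColimit_of_preserves_colimit_cocone (isColimitOfPreserves R (colimit.isColimit K))
    (isColimitOfPreserves (R ⋙ H) (colimit.isColimit K))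

/-- `F` need not preserve colimits: it only serves to write every diagram `K` in `A` as
`(K ⋙ F) ⋙ R` up to isomorphism. -/
theorem preservesColimitsOfShape_of_comp_of_retraction (F : A ⥤ B) (R : B ⥤ A) (H : A ⥤ E)
    (e : F ⋙ R ≅ 𝟭 A) [HasColimitsOfShape J B] [PreservesColimitsOfShape J R]
    [PreservesColimitsOfShape J (R ⋙ H)] : PreservesColimitsOfShape J H where
  preservesColimit {K} :=
    have : PreservesColimit (K ⋙ F ⋙ R) H :=
      preservesColimit_comp_of_preservesColimit (K ⋙ F) R H
    preservesColimit_of_iso_diagram H (Functor.isoWhiskerLeft K e ≪≫ K.rightUnitor)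

end Retraction

section OverLocalization

variable [HasPullbacks C] [HasPullbacks D] {L : C ⥤ D} {ι : D ⥤ C} (adj : L ⊣ ι)

noncomputable def overLocalization (Z : D) : Over (ι.obj Z) ⥤ Over Z :=
  Over.post L ⋙ Over.map (adj.counit.app Z)

instance (Z : D) : (overLocalization adj Z).IsLeftAdjoint :=
  have := adj.isLeftAdjoint
  inferInstanceAs (Over.post L ⋙ Over.map (adj.counit.app Z)).IsLeftAdjoint

noncomputable def overLocalizationPostIso [ι.Full] [ι.Faithful] (Z : D) :
    Over.post ι ⋙ overLocalization adj Z ≅ 𝟭 (Over Z) :=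
  NatIso.ofComponents
    (fun Y => Over.isoMk (asIso (adj.counit.app Y.left) :) (adj.counit_naturality Y.hom).symm)
    (fun u => by ext; exact adj.counit_naturality u.left)

/-- `localizationPullbackComparison` with the factors of both pullbacks swapped, as in
`Over.pullback`. -/
noncomputable def localizationPullbackComparisonOver {X Z : D} (f : X ⟶ Z) (W : Over (ι.obj Z)) :
    L.obj (pullback W.hom (ι.map f)) ⟶ pullback (L.map W.hom ≫ adj.counit.app Z) f :=
  pullback.lift (L.map (pullback.fst _ _)) (L.map (pullback.snd _ _) ≫ adj.counit.app X)
    (by simp [← L.map_comp_assoc, pullback.condition])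

theorem localizationPullbackComparisonOver_eq [ι.Full] [ι.Faithful] {X Z : D} (f : X ⟶ Z)
    (W : Over (ι.obj Z)) :
    localizationPullbackComparisonOver adj f W =
      L.map (pullbackSymmetry W.hom (ι.map f)).hom ≫
        localizationPullbackComparison L ι adj X Z W.left (ι.map f) W.hom ≫
          (pullbackSymmetry _ _).hom ≫
            (pullback.congrHom (by rw [Adjunction.homEquiv_counit]) (ι.preimage_map f)).hom := by
  apply pullback.hom_ext
  · simp only [localizationPullbackComparisonOver, localizationPullbackComparison,
      pullback.congrHom, asIso_hom, Category.assoc, Category.comp_id, pullback.lift_fst,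
      pullback.lift_snd, pullbackSymmetry_hom_comp_fst, pullbackSymmetry_hom_comp_snd,
      ← L.map_comp]
  · simp only [localizationPullbackComparisonOver, localizationPullbackComparison,
      pullback.congrHom, asIso_hom, Category.assoc, Category.comp_id, pullback.lift_fst,
      pullback.lift_snd, pullbackSymmetry_hom_comp_fst, pullbackSymmetry_hom_comp_snd,
      ← L.map_comp_assoc]

theorem localizationPullbackComparisonOver_naturality {X Z : D} (f : X ⟶ Z)
    {W W' : Over (ι.obj Z)} (u : W ⟶ W') :
    L.map (pullback.lift (pullback.fst _ _ ≫ u.left) (pullback.snd _ _)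
        (by rw [Category.assoc, Over.w, pullback.condition])) ≫
        localizationPullbackComparisonOver adj f W' =
      localizationPullbackComparisonOver adj f W ≫
        pullback.lift (pullback.fst _ f ≫ L.map u.left) (pullback.snd _ f)
          (by rw [Category.assoc, ← L.map_comp_assoc, Over.w, pullback.condition]) := by
  apply pullback.hom_ext
  · simp only [localizationPullbackComparisonOver, Category.assoc, pullback.lift_fst,
      pullback.lift_fst_assoc, ← L.map_comp]
  · simp only [localizationPullbackComparisonOver, Category.assoc, pullback.lift_snd,
      ← L.map_comp_assoc]

noncomputable def overLocalizationPullbackComparison {X Z : D} (f : X ⟶ Z) :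
    Over.pullback (ι.map f) ⋙ overLocalization adj X ⟶
      overLocalization adj Z ⋙ Over.pullback f where
  app W := Over.homMk (localizationPullbackComparisonOver adj f W) (pullback.lift_snd _ _ _)
  naturality W W' u := by
    ext
    exact localizationPullbackComparisonOver_naturality adj f u

theorem isIso_overLocalizationPullbackComparison [ι.Full] [ι.Faithful] {X Z : D} (f : X ⟶ Z)
    (lc : ∀ (Y : C) (g : Y ⟶ ι.obj Z),
      IsIso (localizationPullbackComparison L ι adj X Z Y (ι.map f) g)) :
    IsIso (overLocalizationPullbackComparison adj f) := by
  have (W : Over (ι.obj Z)) : IsIso ((overLocalizationPullbackComparison adj f).app W) := by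
    have := lc W.left W.hom
    have : IsIso ((Over.forget X).map ((overLocalizationPullbackComparison adj f).app W)) := by
      change IsIso (localizationPullbackComparisonOver adj f W)
      rw [localizationPullbackComparisonOver_eq]
      infer_instance
    exact isIso_of_reflects_iso _ (Over.forget X)
  exact NatIso.isIso_of_isIso_app _

end OverLocalization

theorem stmt_1_general (I : Type*) [Category I]
    [HasPullbacks C] [HasPullbacks D]
    [HasColimitsOfShape I C]
    (L : C ⥤ D) (ι : D ⥤ C) [ι.Full] [ι.Faithful] (adj : L ⊣ ι)
    (lc : ∀ (X Z : D) (Y : C) (f : ι.obj X ⟶ ι.obj Z) (g : Y ⟶ ι.obj Z),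
      IsIso (localizationPullbackComparison L ι adj X Z Y f g))
    (univC : ∀ {X Z : C} (f : X ⟶ Z), PreservesColimitsOfShape I (Over.pullback f)) :
    ∀ {X Z : D} (f : X ⟶ Z), PreservesColimitsOfShape I (Over.pullback f) := by
  intro X Z f
  have := univC (ι.map f)
  have := isIso_overLocalizationPullbackComparison adj f (lc X Z · (ι.map f))
  have : PreservesColimitsOfShape I (overLocalization adj Z ⋙ Over.pullback f) :=
    preservesColimitsOfShape_of_natIso (asIso (overLocalizationPullbackComparison adj f))
  exact preservesColimitsOfShape_of_comp_of_retraction (Over.post ι) _ _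
    (overLocalizationPostIso adj Z)

/-- Let `L : C ⥤ D` be a locally cartesian localization, where `C`
has pullbacks and `I`-shaped colimits.  If `I`-shaped colimits are universal in `C`,
then `I`-shaped colimits are universal in `D`. -/
theorem stmt_1 (I : Type*) [Category I]
    [HasPullbacks C] [HasPullbacks D]
    [HasColimitsOfShape I C] [HasColimitsOfShape I D]
    (L : C ⥤ D) (ι : D ⥤ C) [ι.Full] [ι.Faithful] (adj : L ⊣ ι)
    (lc : ∀ (X Z : D) (Y : C) (f : ι.obj X ⟶ ι.obj Z) (g : Y ⟶ ι.obj Z),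
      IsIso (localizationPullbackComparison L ι adj X Z Y f g))
    (univC : ∀ {X Z : C} (f : X ⟶ Z), PreservesColimitsOfShape I (Over.pullback f)) :
    ∀ {X Z : D} (f : X ⟶ Z), PreservesColimitsOfShape I (Over.pullback f) :=
  stmt_1_general I L ι adj lc univC
end

section
/- Let I be a sifted category and C a category with finite limits and I-shaped colimits. If I-shaped colimits are universal in C (preserved by pullback along any morphism), then the colimit functor colim_I : Fun(I, C) → C preserves finite products. -/
/-!
For diagrams `F G : I ⥤ C`, the external product `(i, j) ↦ F i × G j` has colimit
`colim F × colim G` as soon as `X × -` preserves `I`-colimits, by computing the colimit one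
variable at a time; finality of the diagonal `I ⥤ I × I` then identifies this with the colimit of
the pointwise product `i ↦ F i × G i`. The functor `X × -` is pullback along `X ⟶ ⊤` (on
`C / ⊤ ≌ C`) followed by the forgetful functor `C / X ⥤ C`, so it preserves `I`-colimits when these
are universal. The terminal object is preserved because a sifted category is connected, so the
colimit of a constant diagram is its value.
-/

open CategoryTheory Limits MonoidalCategory

section CartesianMonoidal

variable {I : Type*} [Category I] {C : Type*} [Category C] [CartesianMonoidalCategory C]
  [HasColimitsOfShape I C]

instance isIso_terminalComparison_colim [IsConnected I] :
    IsIso (CartesianMonoidalCategory.terminalComparison (colim : (I ⥤ C) ⥤ C)) := by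
  have e : colim.obj (𝟙_ (I ⥤ C)) ≅ 𝟙_ C :=
    colimit.isoColimitCocone ⟨_, isColimitConstCocone I (𝟙_ C)⟩
  rw [CartesianMonoidalCategory.toUnit_unique
    (CartesianMonoidalCategory.terminalComparison colim) e.hom]
  infer_instance

variable [∀ X : C, PreservesColimitsOfShape I (tensorLeft X)]

instance preservesColimit₂_curriedTensor (F G : I ⥤ C) :
    PreservesColimit₂ F G (curriedTensor C) :=
  letI : BraidedCategory C := .ofCartesianMonoidalCategory
  have (X : C) : PreservesColimit F ((curriedTensor C).flip.obj X) :=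
    preservesColimit_of_natIso F (BraidedCategory.tensorLeftIsoTensorRight X)
  have (X : C) : PreservesColimit G ((curriedTensor C).obj X) :=
    inferInstanceAs (PreservesColimit G (tensorLeft X))
  inferInstance

variable [IsSifted I]

instance isIso_prodComparison_colim (F G : I ⥤ C) :
    IsIso (CartesianMonoidalCategory.prodComparison (colim : (I ⥤ C) ⥤ C) F G) := by
  let c := (colimit.cocone F).tensor (colimit.cocone G)
  have hc : IsColimit c := (colimit.isColimit F).tensor (colimit.isColimit G)
  have hdesc : CartesianMonoidalCategory.prodComparison colim F G =
      (colimit.isColimit (F ⊗ G)).desc c := by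
    refine (colimit.isColimit (F ⊗ G)).uniq c _ fun i => ?_
    change _ = colimit.ι F i ⊗ₘ colimit.ι G i
    -- `colim.obj F` and `colimit F` agree only after unfolding `colim`, hence `erw`.
    ext
    · erw [Category.assoc, CartesianMonoidalCategory.prodComparison_fst, colim_map, ι_colimMap]
      simp
    · erw [Category.assoc, CartesianMonoidalCategory.prodComparison_snd, colim_map, ι_colimMap]
      simp
  rw [hdesc]
  exact (colimit.isColimit (F ⊗ G)).nonempty_isColimit_iff_isIso_desc.mp ⟨hc⟩

theorem preservesFiniteProducts_colim_of_isSifted :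
    PreservesFiniteProducts (colim : (I ⥤ C) ⥤ C) :=
  have := CartesianMonoidalCategory.preservesLimitsOfShape_discrete_walkingPair_of_isIso_prodComparison
    (colim : (I ⥤ C) ⥤ C)
  have := CartesianMonoidalCategory.preservesLimit_empty_of_isIso_terminalComparison
    (colim : (I ⥤ C) ⥤ C)
  have := preservesLimitsOfShape_pempty_of_preservesTerminal (colim : (I ⥤ C) ⥤ C)
  .of_preserves_binary_and_terminal _

end CartesianMonoidal

section UniversalColimits

variable {I : Type*} [Category I] {C : Type*} [Category C]
  [HasPullbacks C] [HasTerminal C] [HasBinaryProducts C]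

theorem preservesColimitsOfShape_star (X : C)
    [PreservesColimitsOfShape I (Over.pullback (terminal.from X))] :
    PreservesColimitsOfShape I (Over.star X) :=
  have : (Over.forget (⊤_ C)).IsEquivalence :=
    (Over.equivalenceOfIsTerminal terminalIsTerminal).isEquivalence_functor
  have := (Over.forgetAdjStar (⊤_ C)).isEquivalence_right_of_isEquivalence_left
  preservesColimitsOfShape_of_natIso (Over.starPullbackIsoStar (terminal.from X))

theorem preservesColimitsOfShape_prodFunctorObj (X : C)
    [PreservesColimitsOfShape I (Over.pullback (terminal.from X))] :
    PreservesColimitsOfShape I (prod.functor.obj X) :=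
  have := preservesColimitsOfShape_star (I := I) X
  inferInstanceAs (PreservesColimitsOfShape I (Over.star X ⋙ Over.forget X))

end UniversalColimits

/-- Let `I` be a sifted category and `C` a category with finite
limits and `I`-shaped colimits.  If `I`-shaped colimits are universal in `C`
(i.e. pullback along any morphism preserves `I`-shaped colimits), then the
colimit functor `colim : (I ⥤ C) ⥤ C` preserves finite products. -/
theorem stmt_2 {I : Type*} [Category I] [IsSifted I]
    {C : Type*} [Category C] [HasFiniteLimits C] [HasColimitsOfShape I C]
    (univ : ∀ {X Z : C} (f : X ⟶ Z), PreservesColimitsOfShape I (Over.pullback f)) :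
    PreservesFiniteProducts (colim : (I ⥤ C) ⥤ C) :=
  letI := CartesianMonoidalCategory.ofHasFiniteProducts (C := C)
  have (X : C) : PreservesColimitsOfShape I (tensorLeft X) :=
    have := univ (terminal.from X)
    have := preservesColimitsOfShape_prodFunctorObj (I := I) X
    preservesColimitsOfShape_of_natIso (CartesianMonoidalCategory.tensorLeftIsoProd X).symm
  preservesFiniteProducts_colim_of_isSifted
end

section
/- Let L : C → D be a localization functor (left adjoint to a fully faithful inclusion), where C and D have finite products and geometric realizations (colimits over Δᵒᵖ), and suppose geometric realizations preserve finite products in both C and D. Let X•, Y• : Δᵒᵖ → C be simplicial objects with colimits X and Y. If for each n ≥ 0 the natural map L(X_n × Y_n) → L(X_n) × L(Y_n) is an isomorphism, then the natural map L(X × Y) → L(X) × L(Y) is an isomorphism. -/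
/-!
The pointwise hypothesis says that postcomposition with `L` preserves the product `X × Y` of
simplicial objects. As a left adjoint, `L` satisfies `colim ⋙ L ≅ (- ⋙ L) ⋙ colim`, and the right
side preserves `X × Y` because realization in `D` preserves products. Since realization in `C`
preserves `X × Y` too, the comparison map of `colim ⋙ L` at `X, Y` is the comparison map of `L` at
`colim X, colim Y` up to an isomorphism.
-/

open CategoryTheory CategoryTheory.Limits

namespace CategoryTheory.Limits

universe v₁ v₂ v₃ u₁ u₂ u₃

variable {C : Type u₁} [Category.{v₁} C] {D : Type u₂} [Category.{v₂} D]

lemma isIso_prodComparison_of_iso {F H : C ⥤ D} (e : F ≅ H) (A B : C) [HasBinaryProduct A B]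
    [HasBinaryProduct (F.obj A) (F.obj B)] [HasBinaryProduct (H.obj A) (H.obj B)]
    [IsIso (prodComparison F A B)] : IsIso (prodComparison H A B) := by
  have hcomm : prodComparison H A B =
      inv (e.hom.app (A ⨯ B)) ≫ prodComparison F A B ≫ prod.map (e.hom.app A) (e.hom.app B) := by
    rw [IsIso.eq_inv_comp, prodComparison_natural_of_natTrans]
  rw [hcomm]
  infer_instance

variable {J : Type u₃} [Category.{v₃} J] [HasBinaryProducts C] [HasBinaryProducts D]

lemma isIso_prodComparison_whiskeringRight_of_isIso_app (L : C ⥤ D) (X Y : J ⥤ C)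
    (h : ∀ j, IsIso (prodComparison L (X.obj j) (Y.obj j))) :
    IsIso (prodComparison ((Functor.whiskeringRight J C D).obj L) X Y) := by
  suffices ∀ j, IsIso ((prodComparison ((Functor.whiskeringRight J C D).obj L) X Y).app j) by
    exact NatIso.isIso_of_isIso_app _
  intro j
  have hcomp := prodComparison_comp ((Functor.whiskeringRight J C D).obj L)
    ((evaluation J D).obj j) (A := X) (B := Y)
  -- `(- ⋙ L) ⋙ ev j` and `ev j ⋙ L` agree definitionally
  change prodComparison ((evaluation J C).obj j ⋙ L) X Y = _ at hcomp
  rw [prodComparison_comp] at hcomp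
  simp only [evaluation_obj_obj, evaluation_obj_map] at hcomp
  have : IsIso (L.map (prodComparison ((evaluation J C).obj j) X Y) ≫
      prodComparison L (X.obj j) (Y.obj j)) := IsIso.comp_isIso' inferInstance (h j)
  rw [hcomp] at this
  exact IsIso.of_isIso_comp_right _ (prodComparison ((evaluation J D).obj j) _ _)

lemma isIso_prodComparison_colimit [HasColimitsOfShape J C] [HasColimitsOfShape J D]
    (L : C ⥤ D) [PreservesColimitsOfShape J L] (X Y : J ⥤ C)
    [PreservesLimit (pair X Y) (colim : (J ⥤ C) ⥤ C)]
    [PreservesLimitsOfShape (Discrete WalkingPair) (colim : (J ⥤ D) ⥤ D)]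
    (h : ∀ j, IsIso (prodComparison L (X.obj j) (Y.obj j))) :
    IsIso (prodComparison L (colimit X) (colimit Y)) := by
  have := isIso_prodComparison_whiskeringRight_of_isIso_app L X Y h
  have : IsIso (prodComparison ((Functor.whiskeringRight J C D).obj L ⋙ colim) X Y) := by
    rw [prodComparison_comp]
    infer_instance
  have : IsIso (prodComparison (colim ⋙ L) X Y) :=
    isIso_prodComparison_of_iso (preservesColimitNatIso L).symm X Y
  rw [prodComparison_comp] at this
  exact IsIso.of_isIso_comp_left (L.map (prodComparison colim X Y))
    (prodComparison L (colim.obj X) (colim.obj Y))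

end CategoryTheory.Limits

theorem stmt_4_general {C D : Type*} [Category C] [Category D]
    [HasFiniteProducts C] [HasFiniteProducts D]
    [HasColimitsOfShape SimplexCategoryᵒᵖ C] [HasColimitsOfShape SimplexCategoryᵒᵖ D]
    (L : C ⥤ D) (ι : D ⥤ C) (adj : L ⊣ ι)
    (hC : PreservesFiniteProducts (colim : (SimplexCategoryᵒᵖ ⥤ C) ⥤ C))
    (hD : PreservesFiniteProducts (colim : (SimplexCategoryᵒᵖ ⥤ D) ⥤ D))
    (X' Y' : SimplexCategoryᵒᵖ ⥤ C)
    (h : ∀ n : SimplexCategoryᵒᵖ, IsIso (prodComparison L (X'.obj n) (Y'.obj n))) :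
    IsIso (prodComparison L (colimit X') (colimit Y')) := by
  have := adj.leftAdjoint_preservesColimits
  exact isIso_prodComparison_colimit L X' Y' h

/-- Let `L : C ⥤ D` be a localization functor (left adjoint to a
fully faithful inclusion `ι : D ⥤ C`), where `C` and `D` have finite products and
geometric realizations (colimits of shape `Δᵒᵖ`), and suppose geometric realizations
preserve finite products in both `C` and `D`.  Let `X•, Y• : Δᵒᵖ ⥤ C` be simplicial
objects with colimits `X` and `Y`.  If for each `n` the natural map
`L(Xₙ × Yₙ) ⟶ L Xₙ × L Yₙ` is an isomorphism, then the natural map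
`L(X × Y) ⟶ L X × L Y` is an isomorphism. -/
theorem stmt_4 {C D : Type*} [Category C] [Category D]
    [HasFiniteProducts C] [HasFiniteProducts D]
    [HasColimitsOfShape SimplexCategoryᵒᵖ C] [HasColimitsOfShape SimplexCategoryᵒᵖ D]
    (L : C ⥤ D) (ι : D ⥤ C) [ι.Full] [ι.Faithful] (adj : L ⊣ ι)
    (hC : PreservesFiniteProducts (colim : (SimplexCategoryᵒᵖ ⥤ C) ⥤ C))
    (hD : PreservesFiniteProducts (colim : (SimplexCategoryᵒᵖ ⥤ D) ⥤ D))
    (X' Y' : SimplexCategoryᵒᵖ ⥤ C)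
    (h : ∀ n : SimplexCategoryᵒᵖ, IsIso (prodComparison L (X'.obj n) (Y'.obj n))) :
    IsIso (prodComparison L (colimit X') (colimit Y')) :=
  stmt_4_general L ι adj hC hD X' Y' h
end

section
/- Let L : C → D be a reflective localization with fully faithful right adjoint, and suppose L is locally cartesian. Then for any morphism f : X → Z with X, Z ∈ D and any family of objects Y_i over Z indexed by a category I whose colimit Y over Z exists in C and is preserved by pullback along f in C, the objects L(X ×_Z Y_i) compute, via their colimit in D, the object X ×_Z L(Y). -/
/-!
Pullback along `f` commutes with the colimit in `C` by assumption, and the reflector `L`,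
being a left adjoint, carries it to a colimit in `D`; this gives
`colim L (X ×_Z Y_i) ≅ L (X ×_Z Y)`, and local cartesianness identifies the latter with
`X ×_Z L Y`.
-/

open CategoryTheory CategoryTheory.Limits

variable {C D : Type*} [Category C] [Category D]

/-- `Over.forget (G.obj Y)` alone need not preserve colimits, but composed with `F` it is the
left adjoint `Over.post F ⋙ Over.map (a.counit.app Y)` of `Over.post G` followed by
`Over.forget Y`, which preserves the colimits that `D` has. -/
theorem CategoryTheory.Adjunction.preservesColimitsOfShape_overForget_comp
    {F : C ⥤ D} {G : D ⥤ C} (a : F ⊣ G) (Y : D) (I : Type*) [Category I]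
    [HasColimitsOfShape I D] :
    PreservesColimitsOfShape I (Over.forget (G.obj Y) ⋙ F) :=
  have : PreservesColimitsOfShape I (Over.post F ⋙ Over.map (a.counit.app Y)) :=
    (Over.postAdjunctionRight a).leftAdjoint_preservesColimits.preservesColimitsOfShape
  inferInstanceAs
    (PreservesColimitsOfShape I ((Over.post F ⋙ Over.map (a.counit.app Y)) ⋙ Over.forget Y))

/-- Let `L : C ⥤ D` be a reflective localization with fully
faithful right adjoint `ι`, and suppose `L` is locally cartesian.  Given a morphism
`f : ι X ⟶ ι Z` with `X, Z ∈ D` and an `I`-indexed family of objects `Y_i` over `Z`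
(a diagram `G : I ⥤ Over (ι Z)`) whose colimit `Y` over `Z` exists in `C` and is
preserved by pullback along `f` in `C`, the objects `L(X ×_Z Y_i)` compute, via
their colimit in `D`, the object `X ×_Z L Y`. -/
theorem stmt_15 (I : Type*) [Category I]
    [HasPullbacks C] [HasPullbacks D] [HasColimitsOfShape I D]
    (L : C ⥤ D) (ι : D ⥤ C) [ι.Full] [ι.Faithful] (adj : L ⊣ ι)
    (lc : ∀ (X Z : D) (Y : C) (f : ι.obj X ⟶ ι.obj Z) (g : Y ⟶ ι.obj Z),
      IsIso (localizationPullbackComparison L ι adj X Z Y f g))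
    (X Z : D) (f : ι.obj X ⟶ ι.obj Z)
    (G : I ⥤ Over (ι.obj Z)) [HasColimit G]
    (pres : PreservesColimit G (Over.pullback f)) :
    Nonempty
      (colimit (G ⋙ Over.pullback f ⋙ Over.forget (ι.obj X) ⋙ L) ≅
        pullback (ι.preimage f)
          ((adj.homEquiv (colimit G).left Z).symm (colimit G).hom)) := by
  have := adj.preservesColimitsOfShape_overForget_comp X I
  have := lc X Z (colimit G).left f (colimit G).hom
  exact ⟨(preservesColimitIso (Over.pullback f ⋙ Over.forget _ ⋙ L) G).symm ≪≫
    L.mapIso (pullbackSymmetry _ _) ≪≫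
    asIso (localizationPullbackComparison L ι adj X Z _ f _)⟩
end

section
/- Let C have geometric realizations (Δᵒᵖ-colimits) and binary products with realizations preserving binary products, and let C₀ ⊆ C be a full subcategory. Define C' ⊆ C as the smallest full subcategory containing C₀ closed under Δᵒᵖ-colimits and retracts. Then for any product-preserving-on-C₀ left adjoint L : C → D into a category D with the same properties, L preserves binary products of objects of C'. -/
/-!
Fix `X`. The objects `Y` for which `L (X ⨯ Y) ⟶ L X ⨯ L Y` is an isomorphism are closed under
retracts, since a retract of an isomorphism is an isomorphism. They are also closed under
geometric realizations: `Δᵒᵖ` is connected and realizations commute with binary products, so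
`X ⨯ -` preserves realizations in `C` and `L X ⨯ -` does in `D`; `L` preserves them as a left
adjoint, and the comparison map at `|F|` is then the colimit of the comparison maps at the `F n`.
Running this argument once in each variable, with the symmetry of the product in between,
spreads the hypothesis from pairs of objects of `C₀` to pairs of objects of `C'`.
-/

open CategoryTheory CategoryTheory.Limits

variable {C : Type*} [Category C]

/-- The smallest full subcategory (as a predicate on objects) of `C` containing a
full subcategory `C₀` (given by the predicate `P`) and closed under `Δᵒᵖ`-colimits
(geometric realizations) and retracts. -/
inductive RealizationRetractClosure (P : C → Prop) : C → Prop
  | base {X : C} (hX : P X) : RealizationRetractClosure P X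
  | realization (F : SimplexCategoryᵒᵖ ⥤ C)
      (hF : ∀ n, RealizationRetractClosure P (F.obj n))
      (c : Cocone F) (hc : Nonempty (IsColimit c)) : RealizationRetractClosure P c.pt
  | retract {X Y : C} (hY : RealizationRetractClosure P Y)
      (i : X ⟶ Y) (r : Y ⟶ X) (hir : i ≫ r = 𝟙 X) : RealizationRetractClosure P X

namespace CategoryTheory.Limits

variable {J : Type*} [Category J] [HasBinaryProducts C]

@[simps]
noncomputable def prodFunctorObjFst (X : C) (F : J ⥤ C) :
    F ⋙ prod.functor.obj X ⟶ (Functor.const J).obj X where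
  app j := (prod.fst : X ⨯ F.obj j ⟶ X)
  naturality _ _ _ := prod.map_fst _ _

@[simps]
noncomputable def prodFunctorObjSnd (X : C) (F : J ⥤ C) : F ⋙ prod.functor.obj X ⟶ F where
  app j := (prod.snd : X ⨯ F.obj j ⟶ F.obj j)
  naturality _ _ _ := prod.map_snd _ _

noncomputable def isLimitProdFunctorObjFan (X : C) (F : J ⥤ C) :
    IsLimit (BinaryFan.mk (prodFunctorObjFst X F) (prodFunctorObjSnd X F)) :=
  evaluationJointlyReflectsLimits _ fun j =>
    (isLimitMapConeBinaryFanEquiv ((evaluation J C).obj j) _ _).symm (prodIsProd X (F.obj j))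

/- Over a connected `J`, `colim` sends the constant diagram at `X` back to `X`, so applying the
product-preserving `colim` to the pointwise product `const X ⨯ F` identifies
`colimit (F ⋙ (X ⨯ -))` with `X ⨯ colimit F`. -/
lemma preservesColimitsOfShape_prodFunctorObj [IsConnected J] [HasColimitsOfShape J C]
    [PreservesLimitsOfShape (Discrete WalkingPair) (colim : (J ⥤ C) ⥤ C)] (X : C) :
    PreservesColimitsOfShape J (prod.functor.obj X) := by
  refine ⟨fun {F} => ?_⟩
  let e : colimit ((Functor.const J).obj X) ≅ X :=
    colimit.isoColimitCocone ⟨_, isColimitConstCocone J X⟩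
  have he (j : J) : colimit.ι ((Functor.const J).obj X) j ≫ e.hom = 𝟙 X :=
    colimit.isoColimitCocone_ι_hom _ j
  have hfan : IsLimit (BinaryFan.mk (colimMap (prodFunctorObjFst X F) ≫ e.hom)
      (colimMap (prodFunctorObjSnd X F))) :=
    BinaryFan.isLimitCompLeftIso _ e.hom
      (mapIsLimitOfPreservesOfIsLimit colim _ _ (isLimitProdFunctorObjFan X F))
  have hpost : colimit.post F (prod.functor.obj X) =
      prod.lift (colimMap (prodFunctorObjFst X F) ≫ e.hom)
        (colimMap (prodFunctorObjSnd X F)) := by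
    -- `simp` cannot match through `(prod.functor.obj X).obj Y = X ⨯ Y` in implicit arguments,
    -- so the two outer rewrites are chained by hand.
    refine colimit.hom_ext fun j =>
      (colimit.ι_post F _ j).trans (Eq.trans ?_ (prod.comp_lift _ _ _).symm)
    simp only [prod.functor_obj_map, ι_colimMap_assoc, ι_colimMap, prodFunctorObjFst_app,
      prodFunctorObjSnd_app, he]
    exact (prod.lift_fst_comp_snd_comp _ _).symm
  have : IsIso (colimit.post F (prod.functor.obj X)) := by
    rw [hpost]
    exact (limit.isLimit _).nonempty_isLimit_iff_isIso_lift.mp ⟨hfan⟩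
  exact preservesColimit_of_isIso_post _ _

lemma isIso_prodComparison_of_isColimit {D : Type*} [Category D] [IsConnected J]
    [HasColimitsOfShape J C] [HasColimitsOfShape J D] [HasBinaryProducts D]
    [PreservesLimitsOfShape (Discrete WalkingPair) (colim : (J ⥤ C) ⥤ C)]
    [PreservesLimitsOfShape (Discrete WalkingPair) (colim : (J ⥤ D) ⥤ D)]
    (L : C ⥤ D) [PreservesColimitsOfShape J L] (X : C) {F : J ⥤ C} {c : Cocone F}
    (hc : IsColimit c) (h : ∀ j, IsIso (prodComparison L X (F.obj j))) :
    IsIso (prodComparison L X c.pt) := by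
  have := preservesColimitsOfShape_prodFunctorObj (J := J) X
  have := preservesColimitsOfShape_prodFunctorObj (J := J) (L.obj X)
  have : ∀ j, IsIso ((Functor.whiskerLeft F (prodComparisonNatTrans L X)).app j) := h
  have := NatIso.isIso_of_isIso_app (Functor.whiskerLeft F (prodComparisonNatTrans L X))
  exact isIso_app_coconePt_of_preservesColimit F (prodComparisonNatTrans L X) c hc

lemma isIso_prodComparison_of_retract {D : Type*} [Category D] [HasBinaryProducts D]
    (L : C ⥤ D) (X : C) {Y Y' : C} (h : Retract Y Y') (hY' : IsIso (prodComparison L X Y')) :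
    IsIso (prodComparison L X Y) :=
  (MorphismProperty.isomorphisms D).of_retract
    ((prodComparisonNatTrans L X).retractArrowApp h) hY'

lemma prodComparison_braiding {D : Type*} [Category D] [HasBinaryProducts D] (L : C ⥤ D)
    (X Y : C) :
    L.map (prod.braiding Y X).hom ≫ prodComparison L X Y ≫ (prod.braiding _ _).hom =
      prodComparison L Y X := by
  ext <;> simp only [Category.assoc, prod.braiding_hom, prod.lift_fst, prod.lift_snd,
    prodComparison_fst, prodComparison_snd, ← Functor.map_comp]

lemma isIso_prodComparison_symm {D : Type*} [Category D] [HasBinaryProducts D] (L : C ⥤ D)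
    (X Y : C) (h : IsIso (prodComparison L X Y)) : IsIso (prodComparison L Y X) := by
  rw [← prodComparison_braiding]
  infer_instance

end CategoryTheory.Limits

instance : IsConnected SimplexCategory :=
  isConnected_of_hasTerminal _

theorem RealizationRetractClosure.minimal {P Q : C → Prop} (hP : ∀ X, P X → Q X)
    (hQ_realization : ∀ (F : SimplexCategoryᵒᵖ ⥤ C) (c : Cocone F), IsColimit c →
      (∀ n, Q (F.obj n)) → Q c.pt)
    (hQ_retract : ∀ {X Y : C}, Retract X Y → Q Y → Q X) {X : C}
    (hX : RealizationRetractClosure P X) : Q X := by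
  induction hX with
  | base hX => exact hP _ hX
  | realization F _ c hc ih => exact hQ_realization F c hc.some ih
  | retract _ i r hir ih => exact hQ_retract ⟨i, r, hir⟩ ih

lemma isIso_prodComparison_of_realizationRetractClosure {D : Type*} [Category D]
    [HasBinaryProducts C] [HasBinaryProducts D]
    [HasColimitsOfShape SimplexCategoryᵒᵖ C] [HasColimitsOfShape SimplexCategoryᵒᵖ D]
    [PreservesLimitsOfShape (Discrete WalkingPair) (colim : (SimplexCategoryᵒᵖ ⥤ C) ⥤ C)]
    [PreservesLimitsOfShape (Discrete WalkingPair) (colim : (SimplexCategoryᵒᵖ ⥤ D) ⥤ D)]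
    (L : C ⥤ D) [PreservesColimitsOfShape SimplexCategoryᵒᵖ L] (X : C) {P : C → Prop}
    (h : ∀ Y, P Y → IsIso (prodComparison L X Y)) {Y : C}
    (hY : RealizationRetractClosure P Y) : IsIso (prodComparison L X Y) :=
  hY.minimal h (fun _ _ hc => isIso_prodComparison_of_isColimit L X hc)
    (fun h => isIso_prodComparison_of_retract L X h)

/-- Let `C` have geometric realizations (`Δᵒᵖ`-colimits) and binary
products, with realizations preserving binary products, let `C₀ ⊆ C` be a full
subcategory (predicate `P`), and let `C' ⊆ C` be the smallest full subcategory
containing `C₀` and closed under `Δᵒᵖ`-colimits and retracts.  Then any left adjoint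
`L : C ⥤ D` into a category `D` with the same properties which preserves binary
products of objects of `C₀` also preserves binary products of objects of `C'`. -/
theorem stmt_17 {D : Type*} [Category D]
    [HasBinaryProducts C] [HasBinaryProducts D]
    [HasColimitsOfShape SimplexCategoryᵒᵖ C] [HasColimitsOfShape SimplexCategoryᵒᵖ D]
    (hC : PreservesLimitsOfShape (Discrete WalkingPair)
      (colim : (SimplexCategoryᵒᵖ ⥤ C) ⥤ C))
    (hD : PreservesLimitsOfShape (Discrete WalkingPair)
      (colim : (SimplexCategoryᵒᵖ ⥤ D) ⥤ D))
    (L : C ⥤ D) [L.IsLeftAdjoint]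
    (P : C → Prop)
    (h₀ : ∀ X Y : C, P X → P Y → IsIso (prodComparison L X Y))
    (X Y : C) (hX : RealizationRetractClosure P X) (hY : RealizationRetractClosure P Y) :
    IsIso (prodComparison L X Y) := by
  have := hC
  have := hD
  have hY' (Z : C) (hZ : P Z) : IsIso (prodComparison L Y Z) :=
    isIso_prodComparison_symm L Z Y
      (isIso_prodComparison_of_realizationRetractClosure L Z (h₀ Z · hZ) hY)
  exact isIso_prodComparison_symm L Y X
    (isIso_prodComparison_of_realizationRetractClosure L Y hY' hX)
end
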